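/- Let R = ℤ[t, t^{-1}] and let K be the group of 3×3 matrices (A, B, C, D) := [[1, B, D], [0, A, C], [0, 0, 1]] over R with B, C, D ∈ R and A a power of t. Let N_0 = {(1, 0, 0, D) : D ∈ ℤ[t]} and Z' = {(1, 0, 0, D) : D ∈ 2ℤ + tℤ[t]}, central subgroups of K, and set G := K/N_0 and H := K/Z'. Then G and H are generating-bijective: there exist a generating-surjection from G onto H and a generating-surjection from H onto G. -/

import Mathlib

open LaurentPolynomial

/-- The ring `R = ℤ[t, t⁻¹]` of Laurent polynomials over `ℤ`. -/
abbrev LaurentZ : Type := LaurentPolynomial ℤ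

/-- The upper triangular matrix `(A, B, C, D) = [[1, B, D], [0, A, C], [0, 0, 1]]`. -/
noncomputable def Mquad (A B C D : LaurentZ) : Matrix (Fin 3) (Fin 3) LaurentZ :=
  !![1, B, D; 0, A, C; 0, 0, 1]

/-- The set of invertible `3 × 3` matrices over `ℤ[t, t⁻¹]` of the form `(A, B, C, D)` with
`A = tᵏ` for some `k : ℤ`. -/
def Kset : Set (Matrix (Fin 3) (Fin 3) LaurentZ)ˣ :=
  { u | ∃ (k : ℤ) (B C D : LaurentZ),
      (u : Matrix (Fin 3) (Fin 3) LaurentZ) = Mquad (T k) B C D }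

/-- `g` is an ordered generating tuple of `G`. -/
def Generates {G : Type*} [Group G] {n : ℕ} (g : Fin n → G) : Prop :=
  Subgroup.closure (Set.range g) = ⊤

/-- A group homomorphism `φ : G →* H` is a generating-surjection if every ordered
generating tuple of `H` lifts to an ordered generating tuple of `G` along `φ`. -/
def GeneratingSurjection {G H : Type*} [Group G] [Group H] (φ : G →* H) : Prop :=
  ∀ (n : ℕ) (h : Fin n → H), Generates h →
    ∃ g : Fin n → G, Generates g ∧ ∀ i, φ (g i) = h i


/-!
The kernels `N₀` and `Z'` of `K → G` and `K → H` are central and consist of commutators,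
`(1, 0, 0, D) = ⁅(1, D, 0, 0), (1, 0, 1, 0)⁆`. A central subgroup inside the commutator
subgroup consists of non-generators (modulo it every element is `l * z` with `z` central, and
central factors drop out of commutators), so every lift of a generating tuple of `K/N₀` or `K/Z'`
generates `K`. Since `Z' ≤ N₀`, this makes the projection `K/Z' → K/N₀` a
generating-surjection. Conjugation by `diag(1, 1, t⁻¹)` is an automorphism of `K` multiplying
`C` and `D` by `t`; it carries `N₀` into `Z'` (as `t ℤ[t] ⊆ 2ℤ + t ℤ[t]`) and so induces a
generating-surjection `K/N₀ → K/Z'`.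
-/

open scoped commutatorElement

section Generation

variable {G H I : Type*} [Group G] [Group H] [Group I]

theorem Generates.map {n : ℕ} {g : Fin n → G} (hg : Generates g) {f : G →* H}
    (hf : Function.Surjective f) : Generates (f ∘ g) := by
  rw [Generates, Set.range_comp, ← MonoidHom.map_closure, hg, ← MonoidHom.range_eq_map,
    MonoidHom.range_eq_top.mpr hf]

theorem commutatorElement_mul_mul_of_mem_center {a b z w : G} (hz : z ∈ Subgroup.center G)
    (hw : w ∈ Subgroup.center G) : ⁅a * z, b * w⁆ = ⁅a, b⁆ := by
  have hz' := Subgroup.mem_center_iff.mp hz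
  have hw' := Subgroup.mem_center_iff.mp hw
  simp only [commutatorElement_def, mul_inv_rev]
  rw [mul_assoc a z (b * w), ← hz' (b * w)]
  simp only [mul_assoc, mul_inv_cancel_left]
  rw [← mul_assoc w a⁻¹, ← hw' a⁻¹]
  simp only [mul_assoc, mul_inv_cancel_left]

theorem Subgroup.eq_top_of_sup_eq_top_of_le_center_of_le_commutator {L N : Subgroup G}
    [N.Normal] (hLN : L ⊔ N = ⊤) (hcen : N ≤ center G) (hcomm : N ≤ _root_.commutator G) :
    L = ⊤ := by
  have hdecomp (g : G) : ∃ l ∈ L, ∃ z ∈ N, l * z = g :=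
    mem_sup_of_normal_right.mp (hLN ▸ mem_top g)
  have hcommL : _root_.commutator G ≤ L := by
    rw [_root_.commutator_def, commutator_le]
    rintro a - b -
    obtain ⟨l, hl, z, hz, rfl⟩ := hdecomp a
    obtain ⟨l', hl', z', hz', rfl⟩ := hdecomp b
    rw [commutatorElement_mul_mul_of_mem_center (hcen hz) (hcen hz'), commutatorElement_def]
    exact L.mul_mem (L.mul_mem (L.mul_mem hl hl') (L.inv_mem hl)) (L.inv_mem hl')
  rwa [sup_eq_left.mpr (hcomm.trans hcommL)] at hLN

theorem GeneratingSurjection.mk' {N : Subgroup G} [N.Normal] (hcen : N ≤ Subgroup.center G)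
    (hcomm : N ≤ commutator G) : GeneratingSurjection (QuotientGroup.mk' N) := by
  intro n h hh
  choose g hg using fun i => QuotientGroup.mk'_surjective N (h i)
  refine ⟨g, ?_, hg⟩
  have hmap : (Subgroup.closure (Set.range g)).map (QuotientGroup.mk' N) = ⊤ := by
    rw [MonoidHom.map_closure, ← Set.range_comp]
    exact (funext hg : QuotientGroup.mk' N ∘ g = h) ▸ hh
  refine Subgroup.eq_top_of_sup_eq_top_of_le_center_of_le_commutator ?_ hcen hcomm
  rw [← QuotientGroup.ker_mk' N, ← Subgroup.comap_map_eq, hmap, Subgroup.comap_top]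

theorem GeneratingSurjection.comp {f : H →* I} {g : G →* H} (hf : GeneratingSurjection f)
    (hg : GeneratingSurjection g) : GeneratingSurjection (f.comp g) := by
  intro n x hx
  obtain ⟨y, hy, hyx⟩ := hf n x hx
  obtain ⟨z, hz, hzy⟩ := hg n y hy
  exact ⟨z, hz, fun i => by rw [MonoidHom.comp_apply, hzy, hyx]⟩

theorem MulEquiv.generatingSurjection (e : G ≃* H) : GeneratingSurjection e.toMonoidHom :=
  fun _ h hh => ⟨e.symm ∘ h, hh.map (f := e.symm.toMonoidHom) e.symm.surjective,
    fun i => e.apply_symm_apply (h i)⟩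

theorem GeneratingSurjection.of_comp {f : H →* I} {g : G →* H} (hg : Function.Surjective g)
    (hfg : GeneratingSurjection (f.comp g)) : GeneratingSurjection f := by
  intro n x hx
  obtain ⟨y, hy, hyx⟩ := hfg n x hx
  exact ⟨g ∘ y, hy.map hg, hyx⟩

end Generation

noncomputable def Subgroup.conjOfMemNormalizer {G : Type*} [Group G] {H : Subgroup G} {g : G}
    (hg : g ∈ normalizer (H : Set G)) : H ≃* H :=
  (equivSMul (ConjAct.toConjAct g) H).trans
    (MulEquiv.subgroupCongr (conjAct_pointwise_smul_eq_self hg))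

theorem Subgroup.coe_conjOfMemNormalizer {G : Type*} [Group G] {H : Subgroup G} {g : G}
    (hg : g ∈ normalizer (H : Set G)) (h : H) : (conjOfMemNormalizer hg h : G) = g * h * g⁻¹ :=
  rfl

local notation "M₃" => Matrix (Fin 3) (Fin 3) LaurentZ

theorem Mquad_mul (A B C D X Y Z W : LaurentZ) :
    Mquad A B C D * Mquad X Y Z W = Mquad (A * X) (B * X + Y) (C + A * Z) (D + B * Z + W) := by
  ext i j
  fin_cases i <;> fin_cases j <;>
    simp [Mquad, Matrix.mul_apply, Fin.sum_univ_three] <;> ring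

theorem Mquad_one : Mquad 1 0 0 0 = 1 := by
  ext i j
  fin_cases i <;> fin_cases j <;> simp [Mquad]

noncomputable def unipotent (B C D : LaurentZ) : M₃ˣ where
  val := Mquad 1 B C D
  inv := Mquad 1 (-B) (-C) (B * C - D)
  val_inv := by rw [Mquad_mul, ← Mquad_one]; congr 1 <;> ring
  inv_val := by rw [Mquad_mul, ← Mquad_one]; congr 1 <;> ring

theorem T_neg_mul_T (n : ℤ) : (T (-n) : LaurentZ) * T n = 1 := by
  rw [← T_add, neg_add_cancel, T_zero]

theorem T_mul_T_neg (n : ℤ) : (T n : LaurentZ) * T (-n) = 1 := by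
  rw [← T_add, add_neg_cancel, T_zero]

noncomputable def scaling (n : ℤ) : M₃ˣ where
  val := Matrix.diagonal ![1, 1, T (-n)]
  inv := Matrix.diagonal ![1, 1, T n]
  val_inv := by
    rw [Matrix.diagonal_mul_diagonal, ← Matrix.diagonal_one]
    congr 1; funext i; fin_cases i <;> simp [T_neg_mul_T, -T_mul]
  inv_val := by
    rw [Matrix.diagonal_mul_diagonal, ← Matrix.diagonal_one]
    congr 1; funext i; fin_cases i <;> simp [T_mul_T_neg, -T_mul]

theorem scaling_neg (n : ℤ) : scaling (-n) = (scaling n)⁻¹ := by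
  ext1; simp [scaling]

theorem scaling_mul_Mquad_mul_inv (n : ℤ) (A B C D : LaurentZ) :
    (scaling n : M₃) * Mquad A B C D * (((scaling n)⁻¹ : M₃ˣ) : M₃) =
      Mquad A B (T n * C) (T n * D) := by
  ext i j : 1
  rw [Units.inv_mk, scaling, Matrix.mul_diagonal, Matrix.diagonal_mul]
  fin_cases i <;> fin_cases j <;> simp [Mquad, T_mul_T_neg, -T_mul, mul_comm]

section K

variable {K : Subgroup M₃ˣ} (hK : (K : Set M₃ˣ) = Kset)
include hK

theorem unipotent_mem (B C D : LaurentZ) : unipotent B C D ∈ K := by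
  have : unipotent B C D ∈ Kset := ⟨0, B, C, D, by rw [T_zero]; rfl⟩
  rwa [← hK] at this

theorem mem_center_of_coe_eq_Mquad {z : K} {D : LaurentZ}
    (hz : ((z : M₃ˣ) : M₃) = Mquad 1 0 0 D) : z ∈ Subgroup.center K := by
  refine Subgroup.mem_center_iff.mpr fun g => ?_
  obtain ⟨k, B, C, D', hg⟩ : (g : M₃ˣ) ∈ Kset := hK ▸ g.2
  ext1; ext1
  simp only [Subgroup.coe_mul, Units.val_mul, hz, hg, Mquad_mul]
  congr 1 <;> ring

theorem mem_commutator_of_coe_eq_Mquad {z : K} {D : LaurentZ}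
    (hz : ((z : M₃ˣ) : M₃) = Mquad 1 0 0 D) : z ∈ commutator K := by
  have hz' : z = ⁅(⟨unipotent D 0 0, unipotent_mem hK _ _ _⟩ : K),
      ⟨unipotent 0 1 0, unipotent_mem hK _ _ _⟩⁆ := by
    ext1; ext1
    simp only [commutatorElement_def, Subgroup.coe_mul, Subgroup.coe_inv, Units.val_mul, hz,
      unipotent, Units.inv_mk, Mquad_mul]
    congr 1 <;> ring
  rw [hz']
  exact Subgroup.commutator_mem_commutator (Subgroup.mem_top _) (Subgroup.mem_top _)

theorem scaling_mul_mul_inv_mem (n : ℤ) {u : M₃ˣ} (hu : u ∈ K) :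
    scaling n * u * (scaling n)⁻¹ ∈ K := by
  obtain ⟨k, B, C, D, hu⟩ : u ∈ Kset := hK ▸ hu
  have : scaling n * u * (scaling n)⁻¹ ∈ Kset :=
    ⟨k, B, T n * C, T n * D, by simp only [Units.val_mul, hu, scaling_mul_Mquad_mul_inv]⟩
  rwa [← hK] at this

theorem scaling_mem_normalizer (n : ℤ) : scaling n ∈ Subgroup.normalizer (K : Set M₃ˣ) := by
  refine Subgroup.mem_normalizer_iff.mpr fun u => ⟨scaling_mul_mul_inv_mem hK n, fun hu => ?_⟩
  simpa [scaling_neg, mul_assoc] using scaling_mul_mul_inv_mem hK (-n) hu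

end K

theorem stmt19 (K : Subgroup (Matrix (Fin 3) (Fin 3) LaurentZ)ˣ)
    (hK : (K : Set (Matrix (Fin 3) (Fin 3) LaurentZ)ˣ) = Kset)
    (N₀ Z' : Subgroup K)
    -- `N₀ = {(1,0,0,D) : D ∈ ℤ[t]}`
    (hN₀ : (N₀ : Set K) = { u : K | ∃ D : Polynomial ℤ,
        ((u : (Matrix (Fin 3) (Fin 3) LaurentZ)ˣ) : Matrix (Fin 3) (Fin 3) LaurentZ) =
          Mquad 1 0 0 D.toLaurent })
    -- `Z' = {(1,0,0,D) : D ∈ 2ℤ + tℤ[t]}`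
    (hZ' : (Z' : Set K) = { u : K | ∃ D : Polynomial ℤ, Even (D.coeff 0) ∧
        ((u : (Matrix (Fin 3) (Fin 3) LaurentZ)ˣ) : Matrix (Fin 3) (Fin 3) LaurentZ) =
          Mquad 1 0 0 D.toLaurent })
    [hN : N₀.Normal] [hZ : Z'.Normal] :
    ∃ (φ : (K ⧸ N₀) →* (K ⧸ Z')) (ψ : (K ⧸ Z') →* (K ⧸ N₀)),
      GeneratingSurjection φ ∧ GeneratingSurjection ψ := by
  have memN₀ (u : K) :
      u ∈ N₀ ↔ ∃ D : Polynomial ℤ, ((u : M₃ˣ) : M₃) = Mquad 1 0 0 D.toLaurent :=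
    Set.ext_iff.mp hN₀ u
  have hZN : Z' ≤ N₀ := fun u hu => by
    obtain ⟨D, -, hD⟩ := (Set.ext_iff.mp hZ' u).mp hu
    exact (memN₀ u).mpr ⟨D, hD⟩
  have hcen : N₀ ≤ Subgroup.center K := fun u hu => by
    obtain ⟨D, hD⟩ := (memN₀ u).mp hu
    exact mem_center_of_coe_eq_Mquad hK hD
  have hcomm : N₀ ≤ commutator K := fun u hu => by
    obtain ⟨D, hD⟩ := (memN₀ u).mp hu
    exact mem_commutator_of_coe_eq_Mquad hK hD
  set δ := Subgroup.conjOfMemNormalizer (scaling_mem_normalizer hK 1)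
  have hδ : N₀ ≤ Z'.comap δ.toMonoidHom := fun u hu => by
    obtain ⟨D, hD⟩ := (memN₀ u).mp hu
    refine (Set.ext_iff.mp hZ' (δ u)).mpr ⟨.X * D, by simp, ?_⟩
    rw [Subgroup.coe_conjOfMemNormalizer, Units.val_mul, Units.val_mul, hD,
      scaling_mul_Mquad_mul_inv, mul_zero, map_mul, Polynomial.toLaurent_X]
  refine ⟨QuotientGroup.map N₀ Z' δ.toMonoidHom hδ, QuotientGroup.map Z' N₀ (.id K) hZN,
    ?_, ?_⟩
  · refine GeneratingSurjection.of_comp (QuotientGroup.mk'_surjective N₀) ?_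
    exact (GeneratingSurjection.mk' (hZN.trans hcen) (hZN.trans hcomm)).comp
      δ.generatingSurjection
  · exact GeneratingSurjection.of_comp (QuotientGroup.mk'_surjective Z')
      (GeneratingSurjection.mk' hcen hcomm)
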